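/- arXiv:1404.0138 — 7 statements merged into one kernel-verified Lean document; each statement's English description precedes it below -/
import Mathlib

section
/- Let A be an m×m real symmetric matrix partitioned as A = [[W, A21ᵀ],[A21, A22]] where W is the top-left c×c block, and let C = [W; A21] ∈ ℝ^{m×c} (W stacked on top of A21) be the first c columns of A. Then the following three statements are equivalent: (i) rank(W) = rank(A); (ii) A = C W⁺ Cᵀ; (iii) A = C (C⁺ A (C⁺)ᵀ) Cᵀ. -/
/-!
Write `C = A E` and `W = Eᵀ A E` with `E = [I; 0]`. Since `W = Eᵀ C` and `C = A E`, the ranks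
satisfy `rank W ≤ rank C ≤ rank A`. If `rank W = rank A`, both inequalities are equalities, so the
column space of `C` is that of `A` (`A = C Z`) and the row space of `W` is that of `C`
(`C = S W`); then `C W⁺ Cᵀ = S W W⁺ W Z = S W Z = A`. Conversely, any exact factorisation
`A = C X Cᵀ` gives `Cᵀ = Eᵀ A = W X Cᵀ`, hence `rank A ≤ rank C ≤ rank W`. Finally
`C C⁺ C = C` makes every matrix of the form `C X Cᵀ` equal to `C (C⁺ A C⁺ᵀ) Cᵀ`.
-/

open Matrix

/-- `P` is the Moore–Penrose pseudoinverse of `M`. -/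
def IsMoorePenrose {m n : Type*} [Fintype m] [Fintype n]
    (M : Matrix m n ℝ) (P : Matrix n m ℝ) : Prop :=
  M * P * M = M ∧ P * M * P = P ∧ (M * P)ᵀ = M * P ∧ (P * M)ᵀ = P * M

namespace Matrix

variable {K : Type*} [Field K] {m n p : Type*} [Fintype n] [Fintype p]

/-- Equal ranks force equal column spaces, so every column of `Y` is a combination of
the columns of `Y * T`. -/
theorem exists_mul_mul_eq_of_rank_mul_eq {Y : Matrix m n K} {T : Matrix n p K}
    (h : (Y * T).rank = Y.rank) : ∃ S : Matrix p n K, Y * T * S = Y := by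
  classical
  have hrange : LinearMap.range Y.mulVecLin ≤ LinearMap.range (Y * T).mulVecLin :=
    (Submodule.eq_of_le_of_finrank_le
      (by rw [mulVecLin_mul]; exact LinearMap.range_comp_le_range _ _) h.ge).ge
  obtain ⟨L, hL⟩ := Module.projective_lifting_property (Y * T).mulVecLin.rangeRestrict
    (Y.mulVecLin.codRestrict _ fun v => hrange ⟨v, rfl⟩) (LinearMap.surjective_rangeRestrict _)
  refine ⟨L.toMatrix', toLin'.injective ?_⟩
  have hcomp := congrArg ((LinearMap.range (Y * T).mulVecLin).subtype ∘ₗ ·) hL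
  rw [toLin'_mul, toLin'_toMatrix', toLin'_apply', toLin'_apply']
  simpa [LinearMap.comp_assoc] using hcomp

theorem exists_mul_mul_eq_of_rank_mul_eq' [Fintype m] {Y : Matrix m n K} {T : Matrix p m K}
    (h : (T * Y).rank = Y.rank) : ∃ S : Matrix m p K, S * T * Y = Y := by
  obtain ⟨S, hS⟩ := exists_mul_mul_eq_of_rank_mul_eq (Y := Yᵀ) (T := Tᵀ)
    (by rw [← transpose_mul, rank_transpose, rank_transpose, h])
  exact ⟨Sᵀ, by simpa [Matrix.mul_assoc] using congrArg transpose hS⟩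

theorem eq_mul_mul_transpose_same_of_mul_mul_eq_self [Fintype m] {C : Matrix m n K}
    {G : Matrix n m K} (hG : C * G * C = C) {A : Matrix m m K} {X : Matrix n n K}
    (hA : A = C * X * Cᵀ) : A = C * (G * A * Gᵀ) * Cᵀ := by
  have hGt : Cᵀ * Gᵀ * Cᵀ = Cᵀ := by simpa [Matrix.mul_assoc] using congrArg transpose hG
  calc A = C * G * C * X * (Cᵀ * Gᵀ * Cᵀ) := by rw [hG, hGt, hA]
    _ = C * (G * (C * X * Cᵀ) * Gᵀ) * Cᵀ := by simp only [Matrix.mul_assoc]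
    _ = C * (G * A * Gᵀ) * Cᵀ := by rw [hA]

section Sketch

variable [Fintype m] {k : Type*} [Fintype k] {A : Matrix m m K} (E : Matrix m k K)

theorem rank_le_rank_sketch_of_eq_mul_mul_transpose (hA : Aᵀ = A) {X : Matrix k k K}
    (h : A = A * E * X * (A * E)ᵀ) : A.rank ≤ (Eᵀ * A * E).rank := by
  have hCt : (A * E)ᵀ = Eᵀ * A * E * X * (A * E)ᵀ := by
    calc (A * E)ᵀ = Eᵀ * A := by rw [transpose_mul, hA]
      _ = Eᵀ * (A * E * X * (A * E)ᵀ) := by conv_lhs => rw [h]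
      _ = Eᵀ * A * E * X * (A * E)ᵀ := by simp only [Matrix.mul_assoc]
  calc A.rank = (A * E * X * (A * E)ᵀ).rank := by rw [← h]
    _ ≤ (A * E)ᵀ.rank := rank_mul_le_right _ _
    _ = (Eᵀ * A * E * X * (A * E)ᵀ).rank := by rw [← hCt]
    _ ≤ (Eᵀ * A * E * X).rank := rank_mul_le_left _ _
    _ ≤ (Eᵀ * A * E).rank := rank_mul_le_left _ _

theorem eq_mul_mul_transpose_of_rank_sketch_eq (hA : Aᵀ = A) {G : Matrix k k K}
    (hG : Eᵀ * A * E * G * (Eᵀ * A * E) = Eᵀ * A * E) (h : (Eᵀ * A * E).rank = A.rank) :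
    A = A * E * G * (A * E)ᵀ := by
  have hWC : (Eᵀ * A * E).rank ≤ (A * E).rank := by
    rw [Matrix.mul_assoc]; exact rank_mul_le_right _ _
  have hCA : (A * E).rank ≤ A.rank := rank_mul_le_left _ _
  obtain ⟨Z, hZ⟩ := exists_mul_mul_eq_of_rank_mul_eq (Y := A) (T := E) (by omega)
  obtain ⟨S, hS⟩ := exists_mul_mul_eq_of_rank_mul_eq' (Y := A * E) (T := Eᵀ)
    (by rw [← Matrix.mul_assoc]; omega)
  calc A = S * Eᵀ * (A * E) * Z := by rw [hS, hZ]
    _ = S * (Eᵀ * A * E * G * (Eᵀ * A * E)) * Z := by rw [hG]; simp only [Matrix.mul_assoc]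
    _ = S * Eᵀ * (A * E) * G * (Eᵀ * (A * E * Z)) := by simp only [Matrix.mul_assoc]
    _ = A * E * G * (A * E)ᵀ := by rw [hS, hZ, transpose_mul, hA]

theorem rank_sketch_eq_iff_nystrom_exact (hA : Aᵀ = A) {G : Matrix k k K}
    (hG : Eᵀ * A * E * G * (Eᵀ * A * E) = Eᵀ * A * E) {H : Matrix k m K}
    (hH : A * E * H * (A * E) = A * E) :
    ((Eᵀ * A * E).rank = A.rank ↔ A = A * E * G * (A * E)ᵀ) ∧
      ((Eᵀ * A * E).rank = A.rank ↔ A = A * E * (H * A * Hᵀ) * (A * E)ᵀ) := by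
  have hWA : (Eᵀ * A * E).rank ≤ A.rank := (rank_mul_le_left _ _).trans (rank_mul_le_right _ _)
  have exact_of_rank_eq := eq_mul_mul_transpose_of_rank_sketch_eq E hA hG
  refine ⟨⟨exact_of_rank_eq, fun h => ?_⟩, ⟨fun h => ?_, fun h => ?_⟩⟩
  · exact hWA.antisymm (rank_le_rank_sketch_of_eq_mul_mul_transpose E hA h)
  · exact eq_mul_mul_transpose_same_of_mul_mul_eq_self hH (exact_of_rank_eq h)
  · exact hWA.antisymm (rank_le_rank_sketch_of_eq_mul_mul_transpose E hA h)

end Sketch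

end Matrix

/-- For a symmetric matrix `A = [[W, A21ᵀ],[A21, A22]]` with
`C = [W; A21]` its first `c` columns, the following are equivalent:
(i) `rank W = rank A`; (ii) `A = C W⁺ Cᵀ`; (iii) `A = C (C⁺ A (C⁺)ᵀ) Cᵀ`. -/
theorem nystrom_exact_iff_rank_eq {c r : ℕ}
    (W : Matrix (Fin c) (Fin c) ℝ) (A21 : Matrix (Fin r) (Fin c) ℝ)
    (A22 : Matrix (Fin r) (Fin r) ℝ) (hW : Wᵀ = W) (hA22 : A22ᵀ = A22)
    (A : Matrix (Fin c ⊕ Fin r) (Fin c ⊕ Fin r) ℝ)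
    (hA : A = Matrix.fromBlocks W A21ᵀ A21 A22)
    (C : Matrix (Fin c ⊕ Fin r) (Fin c) ℝ)
    (hC : C = Matrix.fromRows W A21)
    (Wp : Matrix (Fin c) (Fin c) ℝ) (hWp : IsMoorePenrose W Wp)
    (Cp : Matrix (Fin c) (Fin c ⊕ Fin r) ℝ) (hCp : IsMoorePenrose C Cp) :
    (W.rank = A.rank ↔ A = C * Wp * Cᵀ) ∧
      (W.rank = A.rank ↔ A = C * (Cp * A * Cpᵀ) * Cᵀ) := by
  let E : Matrix (Fin c ⊕ Fin r) (Fin c) ℝ := fromRows 1 0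
  have hA_symm : Aᵀ = A := by rw [hA, fromBlocks_transpose, hW, hA22, transpose_transpose]
  have hC_sketch : A * E = C := by simp [E, hA, hC, fromBlocks_mul_fromRows]
  have hW_sketch : Eᵀ * A * E = W := by
    rw [Matrix.mul_assoc, hC_sketch, hC, transpose_fromRows, fromCols_mul_fromRows]; simp
  have h := rank_sketch_eq_iff_nystrom_exact E hA_symm (G := Wp) (H := Cp)
    (by rw [hW_sketch]; exact hWp.1) (by rw [hC_sketch]; exact hCp.1)
  rwa [hC_sketch, hW_sketch] at h
end

section
/- Let A be an m×m real symmetric matrix partitioned as A = [[W, A21ᵀ],[A21, A22]] where W is the top-left c×c block. If rank(W) = rank(A), then there exists a matrix X ∈ ℝ^{(m−c)×c} such that A21 = X W and A22 = X W Xᵀ; consequently A = [I_c; X] W [I_c, Xᵀ]. -/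
/-!
The column block `[W; A21]` of `A` has rank between `rank W` and
`rank A`, so its column space is the whole column space of `A`. In particular the remaining columns
`[A21ᵀ; A22]` are combinations of it: `A21ᵀ = W Y` and `A22 = A21 Y`. Symmetry of `W` turns the
first identity into `A21 = Yᵀ W`, and then `X = Yᵀ` gives `A22 = X W Xᵀ`.
-/

open Matrix

namespace Matrix

theorem exists_eq_mul_of_range_mulVecLin_le {R k m n : Type*} [CommSemiring R] [Fintype m]
    [Fintype n] [DecidableEq n] {N : Matrix k m R} {M : Matrix k n R}
    (h : LinearMap.range M.mulVecLin ≤ LinearMap.range N.mulVecLin) :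
    ∃ X : Matrix m n R, M = N * X := by
  have hcol : ∀ j, ∃ v, N *ᵥ v = M.col j := fun j =>
    h ⟨Pi.single j 1, mulVec_single_one M j⟩
  choose v hv using hcol
  refine ⟨(of v)ᵀ, ext fun i j => ?_⟩
  simpa [mulVec, dotProduct, mul_apply] using (congrFun (hv j) i).symm

theorem range_mulVecLin_submatrix_le {R k n o : Type*} [CommSemiring R] [Fintype n] [Fintype o]
    (M : Matrix k n R) (c : o → n) :
    LinearMap.range (M.submatrix id c).mulVecLin ≤ LinearMap.range M.mulVecLin := by
  rw [range_mulVecLin, range_mulVecLin]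
  exact Submodule.span_mono <| by rintro _ ⟨j, rfl⟩; exact ⟨c j, rfl⟩

theorem range_mulVecLin_submatrix_eq_of_rank_eq {K k n o : Type*} [Field K] [Fintype n]
    [Fintype o] {M : Matrix k n K} {c : o → n} (hrank : (M.submatrix id c).rank = M.rank) :
    LinearMap.range (M.submatrix id c).mulVecLin = LinearMap.range M.mulVecLin :=
  Submodule.eq_of_le_of_finrank_eq (range_mulVecLin_submatrix_le M c) hrank

theorem exists_eq_mul_of_rank_eq_rank_fromBlocks {K l m n o : Type*} [Field K] [Fintype l]
    [Fintype m] [DecidableEq m] {A : Matrix n l K} {B : Matrix n m K} {C : Matrix o l K}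
    {D : Matrix o m K} (hrank : A.rank = (fromBlocks A B C D).rank) :
    ∃ Y : Matrix l m K, B = A * Y ∧ D = C * Y := by
  set M := fromBlocks A B C D
  have hleft : M.submatrix id Sum.inl = fromRows A C := by ext (i | i) j <;> rfl
  have hright : M.submatrix id Sum.inr = fromRows B D := by ext (i | i) j <;> rfl
  have hrank_left : (M.submatrix id Sum.inl).rank = M.rank := by
    refine le_antisymm (rank_submatrix_le _ _ _) (hrank ▸ ?_)
    rw [hleft]
    exact rank_submatrix_le (fromRows A C) Sum.inl id
  have hle :
      LinearMap.range (fromRows B D).mulVecLin ≤ LinearMap.range (fromRows A C).mulVecLin := by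
    rw [← hleft, ← hright, range_mulVecLin_submatrix_eq_of_rank_eq hrank_left]
    exact range_mulVecLin_submatrix_le M Sum.inr
  obtain ⟨Y, hY⟩ := exists_eq_mul_of_range_mulVecLin_le hle
  rw [fromRows_mul] at hY
  exact ⟨Y, fromRows_inj hY⟩

theorem fromRows_one_mul_mul_transpose {R m n : Type*} [CommSemiring R] [Fintype m] [DecidableEq m]
    (W : Matrix m m R) (X : Matrix n m R) :
    fromRows 1 X * W * (fromRows 1 X)ᵀ = fromBlocks W (W * Xᵀ) (X * W) (X * W * Xᵀ) := by
  rw [fromRows_mul, transpose_fromRows, fromRows_mul_fromCols]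
  simp

end Matrix

theorem rank_eq_imp_structure_general {c r : ℕ}
    (W : Matrix (Fin c) (Fin c) ℝ) (A21 : Matrix (Fin r) (Fin c) ℝ)
    (A22 : Matrix (Fin r) (Fin r) ℝ) (hW : Wᵀ = W)
    (A : Matrix (Fin c ⊕ Fin r) (Fin c ⊕ Fin r) ℝ)
    (hA : A = Matrix.fromBlocks W A21ᵀ A21 A22)
    (hrank : W.rank = A.rank) :
    ∃ X : Matrix (Fin r) (Fin c) ℝ,
      A21 = X * W ∧ A22 = X * W * Xᵀ ∧
        A = Matrix.fromRows (1 : Matrix (Fin c) (Fin c) ℝ) X * W *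
              (Matrix.fromRows (1 : Matrix (Fin c) (Fin c) ℝ) X)ᵀ := by
  obtain ⟨Y, hA12, hA22⟩ := exists_eq_mul_of_rank_eq_rank_fromBlocks (hA ▸ hrank)
  have hA21 : A21 = Yᵀ * W := by rw [← hW, ← transpose_mul, ← hA12, transpose_transpose]
  refine ⟨Yᵀ, hA21, by rw [hA22, hA21, transpose_transpose], ?_⟩
  rw [hA, fromRows_one_mul_mul_transpose, ← hA21, transpose_transpose, ← hA12, ← hA22]

/-- If `A = [[W, A21ᵀ],[A21, A22]]` is symmetric and
`rank W = rank A`, then there is `X` with `A21 = X W`, `A22 = X W Xᵀ`, and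
consequently `A = [I; X] W [I, Xᵀ]`. -/
theorem rank_eq_imp_structure {c r : ℕ}
    (W : Matrix (Fin c) (Fin c) ℝ) (A21 : Matrix (Fin r) (Fin c) ℝ)
    (A22 : Matrix (Fin r) (Fin r) ℝ) (hW : Wᵀ = W) (hA22 : A22ᵀ = A22)
    (A : Matrix (Fin c ⊕ Fin r) (Fin c ⊕ Fin r) ℝ)
    (hA : A = Matrix.fromBlocks W A21ᵀ A21 A22)
    (hrank : W.rank = A.rank) :
    ∃ X : Matrix (Fin r) (Fin c) ℝ,
      A21 = X * W ∧ A22 = X * W * Xᵀ ∧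
        A = Matrix.fromRows (1 : Matrix (Fin c) (Fin c) ℝ) X * W *
              (Matrix.fromRows (1 : Matrix (Fin c) (Fin c) ℝ) X)ᵀ :=
  rank_eq_imp_structure_general W A21 A22 hW A hA hrank
end

section
/- Let A be an m×m real symmetric matrix partitioned as A = [[W, A21ᵀ],[A21, A22]] where the top-left c×c block W is invertible, and let C = [W; A21] ∈ ℝ^{m×c} (W stacked on top of A21) be the first c columns of A. Define T0 = A21ᵀ A21, T2 = T0 W⁻¹, and T3 = W⁻¹ (A21ᵀ A22 A21) W⁻¹. Then the c×c matrix I_c + W⁻¹ T2 is invertible, and, setting T1 = W⁻¹ (I_c + W⁻¹ T2)⁻¹, the intersection matrix of the modified Nyström method satisfies C⁺ A (C⁺)ᵀ = T1 (W + T2 + T2ᵀ + T3) T1ᵀ. -/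
open Matrix

/-!
If `C` has full column rank, its pseudoinverse is `C⁺ = (CᵀC)⁻¹ Cᵀ`. For `C = [W; A21]` the Gram
matrix is `M = W² + A21ᵀA21 = W (I + W⁻¹T2) W`, so `I + W⁻¹T2` is invertible and `T1 = M⁻¹W`.
Hence `C⁺ A (C⁺)ᵀ = M⁻¹ (CᵀAC) M⁻¹`, and expanding the block product gives
`CᵀAC = W (W + T2 + T2ᵀ + T3) W`.
-/

section FullColumnRank

variable {m n R : Type*} [Fintype m] [Fintype n]

theorem Matrix.mulVec_injective_fromRows_of_left {m₁ m₂ : Type*} [CommRing R]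
    {A₁ : Matrix m₁ n R} (A₂ : Matrix m₂ n R) (h : Function.Injective A₁.mulVec) :
    Function.Injective (fromRows A₁ A₂).mulVec := fun x y hxy => by
  rw [fromRows_mulVec, fromRows_mulVec] at hxy
  simpa using h (congrArg (· ∘ Sum.inl) hxy)

theorem Matrix.isUnit_transpose_mul_self_of_mulVec_injective [DecidableEq n] [Field R]
    [LinearOrder R] [IsStrictOrderedRing R] {M : Matrix m n R} (hM : Function.Injective M.mulVec) :
    IsUnit (Mᵀ * M) := by
  rw [← mulVec_injective_iff_isUnit]
  have hker : LinearMap.ker (Mᵀ * M).mulVecLin = ⊥ := by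
    rw [ker_mulVecLin_transpose_mul_self, LinearMap.ker_eq_bot]
    exact hM
  exact LinearMap.ker_eq_bot.mp hker

theorem IsMoorePenrose.eq_inv_transpose_mul_self_mul_transpose [DecidableEq n]
    {M : Matrix m n ℝ} {P : Matrix n m ℝ} (hP : IsMoorePenrose M P) (hM : IsUnit (Mᵀ * M)) :
    P = (Mᵀ * M)⁻¹ * Mᵀ := by
  obtain ⟨hMPM, -, hMP, -⟩ := hP
  have hMt : Mᵀ * M * P = Mᵀ :=
    calc Mᵀ * M * P = Mᵀ * (M * P)ᵀ := by rw [hMP, Matrix.mul_assoc]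
      _ = (M * P * M)ᵀ := (transpose_mul _ _).symm
      _ = Mᵀ := by rw [hMPM]
  calc P = (Mᵀ * M)⁻¹ * (Mᵀ * M * P) :=
        (nonsing_inv_mul_cancel_left _ _ ((isUnit_iff_isUnit_det _).mp hM)).symm
    _ = (Mᵀ * M)⁻¹ * Mᵀ := by rw [hMt]

end FullColumnRank

theorem Matrix.fromRows_transpose_mul_fromBlocks_mul_fromRows {m n : Type*} [Fintype m]
    [Fintype n] {R : Type*} [CommRing R] (W : Matrix n n R) (B : Matrix m n R)
    (D : Matrix m m R) (hW : Wᵀ = W) :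
    (fromRows W B)ᵀ * fromBlocks W Bᵀ B D * fromRows W B =
      W * W * W + Bᵀ * B * W + W * (Bᵀ * B) + Bᵀ * D * B := by
  rw [transpose_fromRows, fromCols_mul_fromBlocks, fromCols_mul_fromRows, hW]
  simp only [Matrix.add_mul, Matrix.mul_assoc]
  abel

section Congruence

variable {n R : Type*} [Fintype n] [DecidableEq n] [CommRing R] {W : Matrix n n R}

theorem Matrix.inv_mul_mul_self_add_mul_inv (hW : IsUnit W.det) (S : Matrix n n R) :
    W⁻¹ * (W * W + S) * W⁻¹ = 1 + W⁻¹ * (S * W⁻¹) := by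
  simp only [Matrix.mul_add, Matrix.add_mul, Matrix.mul_assoc, nonsing_inv_mul_cancel_left W _ hW,
    mul_nonsing_inv W hW]

theorem Matrix.inv_mul_inv_inv_mul_mul_inv (hW : IsUnit W.det) (M : Matrix n n R) :
    W⁻¹ * (W⁻¹ * M * W⁻¹)⁻¹ = M⁻¹ * W := by
  rw [Matrix.mul_inv_rev, Matrix.mul_inv_rev, nonsing_inv_nonsing_inv W hW, ← Matrix.mul_assoc,
    ← Matrix.mul_assoc, nonsing_inv_mul W hW, Matrix.one_mul]

theorem Matrix.mul_add_mul_inv_add_transpose_add_inv_mul_inv_mul (hW : IsUnit W.det)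
    (hWt : Wᵀ = W) {S : Matrix n n R} (hS : Sᵀ = S) (T : Matrix n n R) :
    W * (W + S * W⁻¹ + (S * W⁻¹)ᵀ + W⁻¹ * T * W⁻¹) * W = W * W * W + S * W + W * S + T := by
  have hWinvt : W⁻¹ᵀ = W⁻¹ := by rw [transpose_nonsing_inv, hWt]
  simp only [transpose_mul, hWinvt, hS, Matrix.mul_add, Matrix.add_mul, Matrix.mul_assoc,
    nonsing_inv_mul W hW, mul_nonsing_inv_cancel_left W _ hW, Matrix.mul_one]
  abel

end Congruence

theorem intersection_matrix_formula_general {c r : ℕ}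
    (W : Matrix (Fin c) (Fin c) ℝ) (A21 : Matrix (Fin r) (Fin c) ℝ)
    (A22 : Matrix (Fin r) (Fin r) ℝ) (hW : Wᵀ = W)
    (hWinv : IsUnit W.det)
    (A : Matrix (Fin c ⊕ Fin r) (Fin c ⊕ Fin r) ℝ)
    (hA : A = Matrix.fromBlocks W A21ᵀ A21 A22)
    (C : Matrix (Fin c ⊕ Fin r) (Fin c) ℝ)
    (hC : C = Matrix.fromRows W A21)
    (Cp : Matrix (Fin c) (Fin c ⊕ Fin r) ℝ) (hCp : IsMoorePenrose C Cp)
    (T0 T2 T3 : Matrix (Fin c) (Fin c) ℝ)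
    (hT0 : T0 = A21ᵀ * A21) (hT2 : T2 = T0 * W⁻¹)
    (hT3 : T3 = W⁻¹ * (A21ᵀ * A22 * A21) * W⁻¹) :
    IsUnit (1 + W⁻¹ * T2).det ∧
      ∀ T1 : Matrix (Fin c) (Fin c) ℝ, T1 = W⁻¹ * (1 + W⁻¹ * T2)⁻¹ →
        Cp * A * Cpᵀ = T1 * (W + T2 + T2ᵀ + T3) * T1ᵀ := by
  have hCtC : Cᵀ * C = W * W + A21ᵀ * A21 := by
    rw [hC, transpose_fromRows, fromCols_mul_fromRows, hW]
  have hCtCunit : IsUnit (Cᵀ * C) := hC ▸ isUnit_transpose_mul_self_of_mulVec_injective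
    (mulVec_injective_fromRows_of_left _ (mulVec_injective_iff_isUnit.mpr
      ((isUnit_iff_isUnit_det W).mpr hWinv)))
  have hCtCdet : IsUnit (Cᵀ * C).det := (isUnit_iff_isUnit_det _).mp hCtCunit
  have hWMW : 1 + W⁻¹ * T2 = W⁻¹ * (Cᵀ * C) * W⁻¹ := by
    rw [hCtC, inv_mul_mul_self_add_mul_inv hWinv, hT2, hT0]
  refine ⟨?_, fun T1 hT1 => ?_⟩
  · rw [hWMW, det_mul, det_mul]
    exact ((isUnit_nonsing_inv_det W hWinv).mul hCtCdet).mul (isUnit_nonsing_inv_det W hWinv)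
  have hT1' : T1 = (Cᵀ * C)⁻¹ * W := by rw [hT1, hWMW, inv_mul_inv_inv_mul_mul_inv hWinv]
  have hCtCinvt : (Cᵀ * C)⁻¹ᵀ = (Cᵀ * C)⁻¹ := by
    rw [transpose_nonsing_inv, transpose_mul, transpose_transpose]
  have hmid : Cᵀ * A * C = W * (W + T2 + T2ᵀ + T3) * W := by
    rw [hC, hA, fromRows_transpose_mul_fromBlocks_mul_fromRows _ _ _ hW, hT2, hT0, hT3,
      mul_add_mul_inv_add_transpose_add_inv_mul_inv_mul hWinv hW
        (by rw [transpose_mul, transpose_transpose])]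
  calc Cp * A * Cpᵀ = (Cᵀ * C)⁻¹ * (Cᵀ * A * C) * (Cᵀ * C)⁻¹ := by
        rw [hCp.eq_inv_transpose_mul_self_mul_transpose hCtCunit, transpose_mul, hCtCinvt,
          transpose_transpose]
        simp only [Matrix.mul_assoc]
    _ = T1 * (W + T2 + T2ᵀ + T3) * T1ᵀ := by
        rw [hmid, hT1', transpose_mul, hCtCinvt, hW]
        simp only [Matrix.mul_assoc]

/-- Fast computation of the intersection matrix of the
modified Nyström method: with `T0 = A21ᵀ A21`, `T2 = T0 W⁻¹`,
`T3 = W⁻¹ (A21ᵀ A22 A21) W⁻¹`, the matrix `I + W⁻¹ T2` is invertible and,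
with `T1 = W⁻¹ (I + W⁻¹ T2)⁻¹`, one has `C⁺ A (C⁺)ᵀ = T1 (W + T2 + T2ᵀ + T3) T1ᵀ`. -/
theorem intersection_matrix_formula {c r : ℕ}
    (W : Matrix (Fin c) (Fin c) ℝ) (A21 : Matrix (Fin r) (Fin c) ℝ)
    (A22 : Matrix (Fin r) (Fin r) ℝ) (hW : Wᵀ = W) (hA22 : A22ᵀ = A22)
    (hWinv : IsUnit W.det)
    (A : Matrix (Fin c ⊕ Fin r) (Fin c ⊕ Fin r) ℝ)
    (hA : A = Matrix.fromBlocks W A21ᵀ A21 A22)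
    (C : Matrix (Fin c ⊕ Fin r) (Fin c) ℝ)
    (hC : C = Matrix.fromRows W A21)
    (Cp : Matrix (Fin c) (Fin c ⊕ Fin r) ℝ) (hCp : IsMoorePenrose C Cp)
    (T0 T2 T3 : Matrix (Fin c) (Fin c) ℝ)
    (hT0 : T0 = A21ᵀ * A21) (hT2 : T2 = T0 * W⁻¹)
    (hT3 : T3 = W⁻¹ * (A21ᵀ * A22 * A21) * W⁻¹) :
    IsUnit (1 + W⁻¹ * T2).det ∧
      ∀ T1 : Matrix (Fin c) (Fin c) ℝ, T1 = W⁻¹ * (1 + W⁻¹ * T2)⁻¹ →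
        Cp * A * Cpᵀ = T1 * (W + T2 + T2ᵀ + T3) * T1ᵀ :=
  intersection_matrix_formula_general W A21 A22 hW hWinv A hA C hC Cp hCp T0 T2 T3 hT0 hT2 hT3
end

section
/- Let V ∈ ℝ^{m×m} be a symmetric positive definite matrix and let X ∈ ℝ^{m×n} be arbitrary. Then Xᵀ V X (Xᵀ V X)⁺ Xᵀ = Xᵀ. -/
/-!
With `A = Xᴴ V X` and `A P A = A`, the defect `D = A P Xᴴ - Xᴴ` satisfies `D V X = 0`; since `A`
is Hermitian, `Dᴴ = X (Pᴴ A) - X`, so `D V Dᴴ = 0`, and positive definiteness of `V` forces `D = 0`.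
-/

open Matrix

theorem Matrix.PosDef.eq_zero_of_mul_mul_conjTranspose_eq_zero {m n R : Type*} [Fintype m]
    [Ring R] [PartialOrder R] [StarRing R] {V : Matrix m m R} (hV : V.PosDef)
    {D : Matrix n m R} (h : D * V * Dᴴ = 0) : D = 0 := by
  ext i j
  by_contra hne
  have hrow : star (D i) ≠ 0 := fun h0 => hne (by simpa using congrFun (star_eq_zero.mp h0) j)
  have hdiag : star (star (D i)) ⬝ᵥ (V *ᵥ star (D i)) = (D * V * Dᴴ) i i := by
    rw [star_star, dotProduct_mulVec]; rfl
  have := hV.dotProduct_mulVec_pos hrow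
  rw [hdiag, h] at this
  exact lt_irrefl _ this

theorem Matrix.PosDef.conjTranspose_mul_mul_mul_mul_conjTranspose_eq {m n R : Type*}
    [Fintype m] [Fintype n] [Ring R] [PartialOrder R] [StarRing R]
    {V : Matrix m m R} (hV : V.PosDef) {X : Matrix m n R} {P : Matrix n n R}
    (hP : Xᴴ * V * X * P * (Xᴴ * V * X) = Xᴴ * V * X) :
    Xᴴ * V * X * P * Xᴴ = Xᴴ := by
  set A := Xᴴ * V * X
  have hAH : Aᴴ = A := isHermitian_conjTranspose_mul_mul X hV.isHermitian
  set D := A * P * Xᴴ - Xᴴ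
  have hDVX : D * V * X = 0 := by
    calc D * V * X = A * P * A - A := by simp only [D, A, Matrix.sub_mul, Matrix.mul_assoc]
      _ = 0 := by rw [hP, sub_self]
  have hDVD : D * V * Dᴴ = 0 := by
    have hDH : Dᴴ = X * (Pᴴ * A) - X := by
      simp [D, conjTranspose_sub, conjTranspose_mul, hAH, Matrix.mul_assoc]
    rw [hDH, Matrix.mul_sub, ← Matrix.mul_assoc, hDVX, Matrix.zero_mul, sub_self]
  exact sub_eq_zero.mp (hV.eq_zero_of_mul_mul_conjTranspose_eq_zero hDVD)

/-- For a symmetric positive definite `V` and any `X`,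
`Xᵀ V X (Xᵀ V X)⁺ Xᵀ = Xᵀ`. -/
theorem posdef_sandwich_pinv {m n : ℕ}
    (V : Matrix (Fin m) (Fin m) ℝ) (hV : V.PosDef)
    (X : Matrix (Fin m) (Fin n) ℝ)
    (P : Matrix (Fin n) (Fin n) ℝ) (hP : IsMoorePenrose (Xᵀ * V * X) P) :
    Xᵀ * V * X * P * Xᵀ = Xᵀ := by
  simpa only [conjTranspose_eq_transpose_of_trivial] using
    hV.conjTranspose_mul_mul_mul_mul_conjTranspose_eq (X := X) (P := P)
      (by simpa only [conjTranspose_eq_transpose_of_trivial] using hP.1)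
end

section
/- Let k and m be positive integers with k dividing m, let p = m/k, and let α ∈ [0,1). Let B = (1−α) I_p + α J_p ∈ ℝ^{p×p}, where J_p is the p×p all-ones matrix, and let A ∈ ℝ^{m×m} be the block-diagonal matrix with k diagonal blocks all equal to B. Then inf{‖A − M‖_F : M ∈ ℝ^{m×m}, rank(M) ≤ k} = (1 − α)·√(m − k). -/
/-!
Write `A = (1 - α) I + α QᵀQ`, where `Q` is the `k × m` indicator matrix of the blocks, so that
`Q Qᵀ = p I`.

Lower bound: the kernel of a matrix `M` of rank `≤ k` has dimension `≥ m - k`. On a unit vector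
`u` of that kernel, `‖(A - M) u‖ = ‖A u‖ ≥ 1 - α` because `α QᵀQ` is positive semidefinite, and
by Bessel's inequality for the rows of `A - M` the squares of these norms over an orthonormal
basis of the kernel add up to at most `‖A - M‖_F²`.

Upper bound: `M = (α + (1 - α)/p) QᵀQ` has rank `≤ k`, and `A - M = (1 - α) P` where
`P = I - p⁻¹ QᵀQ` is the orthogonal projection onto the orthogonal complement of the row space
of `Q`; the squared Frobenius norm of `P` is its trace `m - k`.
-/

open Matrix

/-- The squared Frobenius norm of a real matrix. -/
noncomputable def frobSq {m n : Type*} [Fintype m] [Fintype n]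
    (M : Matrix m n ℝ) : ℝ :=
  ∑ i, ∑ j, (M i j) ^ 2

/-- The Frobenius norm of a real matrix. -/
noncomputable def frobNorm {m n : Type*} [Fintype m] [Fintype n]
    (M : Matrix m n ℝ) : ℝ :=
  Real.sqrt (frobSq M)

lemma LinearMap.IsPositive.mul_norm_le_norm_smul_add {E : Type*} [NormedAddCommGroup E]
    [InnerProductSpace ℝ E] {T : E →ₗ[ℝ] E} (hT : T.IsPositive) {a : ℝ} (ha : 0 ≤ a) (x : E) :
    a * ‖x‖ ≤ ‖a • x + T x‖ := by
  have hcross : 0 ≤ inner ℝ (a • x) (T x) := by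
    rw [real_inner_smul_left, real_inner_comm]
    exact mul_nonneg ha (hT.inner_nonneg_left x)
  have hsq : (a * ‖x‖) ^ 2 ≤ ‖a • x + T x‖ ^ 2 := by
    rw [norm_add_sq_real, norm_smul, Real.norm_of_nonneg ha]
    nlinarith [sq_nonneg ‖T x‖]
  exact (pow_le_pow_iff_left₀ (by positivity) (norm_nonneg _) two_ne_zero).mp hsq

lemma Matrix.PosSemidef.mul_norm_le_norm_toEuclideanLin_smul_one_add {n : Type*} [Fintype n]
    [DecidableEq n] {S : Matrix n n ℝ} (hS : S.PosSemidef) {a : ℝ} (ha : 0 ≤ a)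
    (u : EuclideanSpace ℝ n) : a * ‖u‖ ≤ ‖toEuclideanLin (a • 1 + S) u‖ := by
  simpa [toLpLin_one] using
    (isPositive_toEuclideanLin_iff.mpr hS).mul_norm_le_norm_smul_add ha u

section Frobenius

variable {m n : Type*} [Fintype m] [Fintype n]

lemma frobSq_eq_sum_norm_row_sq (X : Matrix m n ℝ) :
    frobSq X = ∑ i, ‖WithLp.toLp 2 (X i)‖ ^ 2 := by
  simp [frobSq, EuclideanSpace.norm_sq_eq]

lemma norm_toEuclideanLin_sq [DecidableEq n] (X : Matrix m n ℝ) (w : EuclideanSpace ℝ n) :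
    ‖toEuclideanLin X w‖ ^ 2 = ∑ i, inner ℝ w (WithLp.toLp 2 (X i)) ^ 2 := by
  simp [EuclideanSpace.norm_sq_eq, mulVec, dotProduct, PiLp.inner_apply]

lemma sum_norm_toEuclideanLin_sq_le_frobSq [DecidableEq n] (X : Matrix m n ℝ)
    {ι : Type*} [Fintype ι] {v : ι → EuclideanSpace ℝ n} (hv : Orthonormal ℝ v) :
    ∑ j, ‖toEuclideanLin X (v j)‖ ^ 2 ≤ frobSq X := by
  simp only [norm_toEuclideanLin_sq, frobSq_eq_sum_norm_row_sq]
  rw [Finset.sum_comm]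
  gcongr with i
  simpa [real_inner_comm] using
    hv.sum_inner_products_le (WithLp.toLp 2 (X i)) (s := Finset.univ)

lemma frobSq_smul (c : ℝ) (X : Matrix m n ℝ) : frobSq (c • X) = c ^ 2 * frobSq X := by
  simp [frobSq, mul_pow, Finset.mul_sum]

lemma frobNorm_smul (c : ℝ) (X : Matrix m n ℝ) : frobNorm (c • X) = |c| * frobNorm X := by
  rw [frobNorm, frobSq_smul, Real.sqrt_mul (sq_nonneg c), Real.sqrt_sq_eq_abs, frobNorm]

lemma frobSq_eq_trace_transpose_mul (X : Matrix m n ℝ) : frobSq X = trace (Xᵀ * X) := by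
  rw [frobSq, Finset.sum_comm]
  simp [trace, mul_apply, sq]

lemma frobSq_eq_trace_of_isSymm_of_isIdempotentElem [DecidableEq n] {P : Matrix n n ℝ}
    (hsymm : P.IsSymm) (hidem : IsIdempotentElem P) : frobSq P = trace P := by
  rw [frobSq_eq_trace_transpose_mul, hsymm.eq, hidem.eq]

lemma frobSq_one_sub_inv_smul_transpose_mul [DecidableEq n] [DecidableEq m] (Q : Matrix m n ℝ)
    {s : ℝ} (hs : s ≠ 0) (hQ : Q * Qᵀ = s • 1) :
    frobSq (1 - s⁻¹ • (Qᵀ * Q)) = Fintype.card n - Fintype.card m := by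
  have hsymm : (Qᵀ * Q).IsSymm := by simp [IsSymm, transpose_mul]
  have hidem : IsIdempotentElem (s⁻¹ • (Qᵀ * Q)) := by
    rw [IsIdempotentElem, Matrix.smul_mul, Matrix.mul_smul, Matrix.mul_assoc,
      ← Matrix.mul_assoc Q, hQ, Matrix.smul_mul, Matrix.one_mul, Matrix.mul_smul, smul_smul,
      smul_smul, inv_mul_cancel_right₀ hs]
  rw [frobSq_eq_trace_of_isSymm_of_isIdempotentElem (isSymm_one.sub (hsymm.smul _)) hidem.one_sub,
    trace_sub, trace_smul, trace_mul_comm, hQ, trace_smul, trace_one, trace_one, smul_eq_mul,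
    smul_eq_mul, inv_mul_cancel_left₀ hs]

lemma frobNorm_smul_one_add_smul_sub_eq [DecidableEq n] [DecidableEq m] (Q : Matrix m n ℝ)
    {s : ℝ} (hs : s ≠ 0) (hQ : Q * Qᵀ = s • 1) (a b : ℝ) :
    frobNorm (a • 1 + b • (Qᵀ * Q) - ((b + a / s) • Qᵀ) * Q) =
      |a| * √(Fintype.card n - Fintype.card m) := by
  have : a • 1 + b • (Qᵀ * Q) - ((b + a / s) • Qᵀ) * Q = a • (1 - s⁻¹ • (Qᵀ * Q)) := by
    rw [Matrix.smul_mul]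
    module
  rw [this, frobNorm_smul, frobNorm, frobSq_one_sub_inv_smul_transpose_mul Q hs hQ]

lemma card_sub_rank_le_finrank_ker [DecidableEq n] (M : Matrix m n ℝ) :
    Fintype.card n - M.rank ≤ Module.finrank ℝ (LinearMap.ker (toEuclideanLin M)) := by
  have hrank : M.rank = Module.finrank ℝ (LinearMap.range (toEuclideanLin M)) :=
    M.rank_eq_finrank_range_toLin (EuclideanSpace.basisFun m ℝ).toBasis
      (EuclideanSpace.basisFun n ℝ).toBasis
  have := LinearMap.finrank_range_add_finrank_ker (toEuclideanLin M)
  rw [finrank_euclideanSpace] at this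
  omega

lemma mul_sqrt_card_sub_rank_le_frobNorm [DecidableEq n] {A M : Matrix m n ℝ} {c : ℝ} {r : ℕ}
    (hc : 0 ≤ c) (hA : ∀ u, c * ‖u‖ ≤ ‖toEuclideanLin A u‖) (hM : M.rank ≤ r) :
    c * √((Fintype.card n : ℝ) - r) ≤ frobNorm (A - M) := by
  have hker_dim := card_sub_rank_le_finrank_ker M
  set K := LinearMap.ker (toEuclideanLin M)
  let b := stdOrthonormalBasis ℝ K
  have hv : Orthonormal ℝ (K.subtypeₗᵢ ∘ b) := b.orthonormal.comp_linearIsometry K.subtypeₗᵢ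
  have hdim : (Fintype.card n : ℝ) - r ≤ Module.finrank ℝ K := by
    have : Fintype.card n ≤ Module.finrank ℝ K + r := by omega
    rw [sub_le_iff_le_add]
    exact_mod_cast this
  have hunit : ∀ j, c ^ 2 ≤ ‖toEuclideanLin (A - M) (b j)‖ ^ 2 := fun j => by
    have hker : toEuclideanLin M (b j) = 0 := (b j).2
    rw [map_sub, LinearMap.sub_apply, hker, sub_zero]
    have h := hA (b j)
    rw [show ‖((b j : K) : EuclideanSpace ℝ n)‖ = 1 from hv.1 j, mul_one] at h
    exact pow_le_pow_left₀ hc h 2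
  rw [frobNorm, ← Real.sqrt_sq hc, ← Real.sqrt_mul (sq_nonneg c)]
  apply Real.sqrt_le_sqrt
  calc c ^ 2 * ((Fintype.card n : ℝ) - r) ≤ ∑ _j : Fin (Module.finrank ℝ K), c ^ 2 := by
        rw [Finset.sum_const, Finset.card_univ, Fintype.card_fin, nsmul_eq_mul, mul_comm]
        gcongr
    _ ≤ ∑ j, ‖toEuclideanLin (A - M) (b j)‖ ^ 2 := Finset.sum_le_sum fun j _ => hunit j
    _ ≤ frobSq (A - M) := sum_norm_toEuclideanLin_sq_le_frobSq (A - M) hv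

end Frobenius

section BlockIndicator

variable (ι κ : Type*) [DecidableEq κ]

def blockIndicator : Matrix κ (ι × κ) ℝ := of fun b x => if x.2 = b then 1 else 0

variable [Fintype κ]

lemma blockIndicator_mul_transpose [Fintype ι] :
    blockIndicator ι κ * (blockIndicator ι κ)ᵀ = (Fintype.card ι : ℝ) • 1 := by
  ext b b'
  by_cases h : b = b' <;> simp [blockIndicator, mul_apply, Fintype.sum_prod_type, h, Ne.symm]

lemma blockDiagonal_smul_one_add_smul_ones [DecidableEq ι] (a b : ℝ) :
    blockDiagonal (fun _ : κ => a • (1 : Matrix ι ι ℝ) + b • of fun _ _ => 1) =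
      a • 1 + b • ((blockIndicator ι κ)ᵀ * blockIndicator ι κ) := by
  ext ⟨i, c⟩ ⟨j, c'⟩
  by_cases hc : c = c' <;> simp [blockIndicator, mul_apply, blockDiagonal_apply, one_apply, hc]

end BlockIndicator

theorem best_rank_k_error_block_diagonal_general (k p : ℕ) (hp : 0 < p)
    (α : ℝ) (hα0 : 0 ≤ α) (hα1 : α < 1)
    (B : Matrix (Fin p) (Fin p) ℝ)
    (hB : B = (1 - α) • (1 : Matrix (Fin p) (Fin p) ℝ) +
            α • Matrix.of (fun _ _ => (1 : ℝ)))
    (A : Matrix (Fin p × Fin k) (Fin p × Fin k) ℝ)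
    (hA : A = Matrix.blockDiagonal (fun _ : Fin k => B)) :
    sInf {x : ℝ | ∃ M : Matrix (Fin p × Fin k) (Fin p × Fin k) ℝ,
            M.rank ≤ k ∧ x = frobNorm (A - M)} =
      (1 - α) * Real.sqrt ((k : ℝ) * p - k) := by
  set Q := blockIndicator (Fin p) (Fin k)
  have hQ : Q * Qᵀ = (p : ℝ) • 1 := by simpa using blockIndicator_mul_transpose (Fin p) (Fin k)
  have hA' : A = (1 - α) • 1 + α • (Qᵀ * Q) := by
    rw [hA, hB, blockDiagonal_smul_one_add_smul_ones]
  have hcard : (Fintype.card (Fin p × Fin k) : ℝ) - k = k * p - k := by simp [mul_comm]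
  have hα : 0 ≤ 1 - α := by linarith
  refine IsLeast.csInf_eq ⟨⟨((α + (1 - α) / p) • Qᵀ) * Q, ?_, ?_⟩, ?_⟩
  · exact (rank_mul_le_right _ _).trans ((rank_le_card_height Q).trans_eq (Fintype.card_fin k))
  · rw [hA', frobNorm_smul_one_add_smul_sub_eq Q (by positivity) hQ, abs_of_nonneg hα,
      Fintype.card_fin, hcard]
  · rintro _ ⟨M, hM, rfl⟩
    rw [← hcard]
    refine mul_sqrt_card_sub_rank_le_frobNorm hα (fun u => ?_) hM
    have hS := (posSemidef_conjTranspose_mul_self Q).smul hα0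
    rw [hA']
    exact hS.mul_norm_le_norm_toEuclideanLin_smul_one_add hα u

/-- For `B = (1−α) I_p + α J_p` and `A` the `m × m`
block-diagonal matrix (`m = k p`) with `k` diagonal blocks equal to `B`, the
best rank-`k` approximation error of `A` in Frobenius norm is
`(1 − α) √(m − k)`. -/
theorem best_rank_k_error_block_diagonal (k p : ℕ) (hk : 0 < k) (hp : 0 < p)
    (α : ℝ) (hα0 : 0 ≤ α) (hα1 : α < 1)
    (B : Matrix (Fin p) (Fin p) ℝ)
    (hB : B = (1 - α) • (1 : Matrix (Fin p) (Fin p) ℝ) +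
            α • Matrix.of (fun _ _ => (1 : ℝ)))
    (A : Matrix (Fin p × Fin k) (Fin p × Fin k) ℝ)
    (hA : A = Matrix.blockDiagonal (fun _ : Fin k => B)) :
    sInf {x : ℝ | ∃ M : Matrix (Fin p × Fin k) (Fin p × Fin k) ℝ,
            M.rank ≤ k ∧ x = frobNorm (A - M)} =
      (1 - α) * Real.sqrt ((k : ℝ) * p - k) :=
  best_rank_k_error_block_diagonal_general k p hp α hα0 hα1 B hB A hA
end

section
/- Let B ∈ ℝ^{p×p}, let k ≥ 1 be an integer, let m = k·p, and let A ∈ ℝ^{m×m} be the block-diagonal matrix with k diagonal blocks all equal to B. For each i = 1,…,k let Ĉ_i ∈ ℝ^{p×c_i}, and let C ∈ ℝ^{m×c} with c = Σ_{i=1}^k c_i be the block-diagonal matrix with diagonal blocks Ĉ₁,…,Ĉ_k. Then ‖A − C (C⁺ A (C⁺)ᵀ) Cᵀ‖_F² = Σ_{i=1}^k ‖B − Ĉ_i (Ĉ_i⁺ B (Ĉ_i⁺)ᵀ) Ĉ_iᵀ‖_F². -/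
open Matrix

lemma isMoorePenrose_unique {m n : Type*} [Fintype m] [Fintype n]
    {M : Matrix m n ℝ} {P Q : Matrix n m ℝ}
    (hP : IsMoorePenrose M P) (hQ : IsMoorePenrose M Q) : P = Q := by
  obtain ⟨hP1, hP2, hP3, hP4⟩ := hP
  obtain ⟨hQ1, hQ2, hQ3, hQ4⟩ := hQ
  have hMP : M * P = M * Q := by
    calc M * P = M * Q * M * P := by rw [hQ1]
    _ = (M * Q) * (M * P) := Matrix.mul_assoc (M * Q) M P
    _ = (M * Q)ᵀ * (M * P)ᵀ := by rw [hQ3, hP3]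
    _ = ((M * P) * (M * Q))ᵀ := (Matrix.transpose_mul (M * P) (M * Q)).symm
    _ = (M * P * M * Q)ᵀ := by rw [Matrix.mul_assoc (M * P) M Q]
    _ = (M * Q)ᵀ := by rw [hP1]
    _ = M * Q := hQ3
  have hPM : P * M = Q * M := by
    calc P * M = P * (M * Q * M) := by rw [hQ1]
    _ = (P * M) * (Q * M) := by
        rw [Matrix.mul_assoc P M (Q * M), ← Matrix.mul_assoc M Q M]
    _ = (P * M)ᵀ * (Q * M)ᵀ := by rw [hP4, hQ4]
    _ = ((Q * M) * (P * M))ᵀ := (Matrix.transpose_mul (Q * M) (P * M)).symm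
    _ = (Q * (M * P * M))ᵀ := by
        rw [Matrix.mul_assoc Q M (P * M), ← Matrix.mul_assoc M P M]
    _ = (Q * M)ᵀ := by rw [hP1]
    _ = Q * M := hQ4
  calc P = P * M * P := hP2.symm
  _ = P * (M * Q) := by rw [Matrix.mul_assoc, hMP]
  _ = (Q * M) * Q := by rw [← Matrix.mul_assoc, hPM]
  _ = Q := hQ2

lemma isMoorePenrose_blockDiagonal' {k : ℕ} {p q : Fin k → ℕ}
    {M : ∀ i, Matrix (Fin (p i)) (Fin (q i)) ℝ}
    {P : ∀ i, Matrix (Fin (q i)) (Fin (p i)) ℝ}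
    (h : ∀ i, IsMoorePenrose (M i) (P i)) :
    IsMoorePenrose (blockDiagonal' M) (blockDiagonal' P) := by
  refine ⟨?_, ?_, ?_, ?_⟩ <;>
    simp only [← Matrix.blockDiagonal'_mul, Matrix.blockDiagonal'_transpose] <;>
    exact congrArg _ (funext fun i => by
      first
        | exact (h i).1
        | exact (h i).2.1
        | exact (h i).2.2.1
        | exact (h i).2.2.2)

lemma frobSq_blockDiagonal' {k : ℕ} {p q : Fin k → ℕ}
    (D : ∀ i, Matrix (Fin (p i)) (Fin (q i)) ℝ) :
    frobSq (blockDiagonal' D) = ∑ i, frobSq (D i) := by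
  simp only [frobSq]
  rw [← Finset.univ_sigma_univ, Finset.sum_sigma]
  refine Finset.sum_congr rfl fun i _ => ?_
  refine Finset.sum_congr rfl fun a _ => ?_
  rw [← Finset.univ_sigma_univ, Finset.sum_sigma]
  rw [Finset.sum_eq_single i]
  · exact Finset.sum_congr rfl fun b _ => by
      simp [Matrix.blockDiagonal'_apply_eq]
  · intro j _ hj
    refine Finset.sum_eq_zero fun b _ => ?_
    simp [Matrix.blockDiagonal'_apply_ne _ _ _ (Ne.symm hj)]
  · simp

/-- The modified Nyström error for a block-diagonal matrix
with blocks `B` and a block-diagonal column matrix `C = diag(Ĉ₁, …, Ĉ_k)`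
decomposes as the sum of the per-block modified Nyström errors. -/
theorem block_diagonal_nystrom_error (p k : ℕ) (hk : 0 < k)
    (B : Matrix (Fin p) (Fin p) ℝ)
    (ci : Fin k → ℕ)
    (Chat : ∀ i : Fin k, Matrix (Fin p) (Fin (ci i)) ℝ)
    (A : Matrix ((i : Fin k) × Fin p) ((i : Fin k) × Fin p) ℝ)
    (hA : A = Matrix.blockDiagonal' (fun _ : Fin k => B))
    (C : Matrix ((i : Fin k) × Fin p) ((i : Fin k) × Fin (ci i)) ℝ)
    (hC : C = Matrix.blockDiagonal' Chat)
    (Cp : Matrix ((i : Fin k) × Fin (ci i)) ((i : Fin k) × Fin p) ℝ)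
    (hCp : IsMoorePenrose C Cp)
    (Cphat : ∀ i : Fin k, Matrix (Fin (ci i)) (Fin p) ℝ)
    (hCphat : ∀ i, IsMoorePenrose (Chat i) (Cphat i)) :
    frobSq (A - C * (Cp * A * Cpᵀ) * Cᵀ) =
      ∑ i : Fin k,
        frobSq (B - Chat i * (Cphat i * B * (Cphat i)ᵀ) * (Chat i)ᵀ) := by
  have hCp' : Cp = Matrix.blockDiagonal' Cphat := by
    apply isMoorePenrose_unique hCp
    rw [hC]
    exact isMoorePenrose_blockDiagonal' hCphat
  subst hA hC hCp'
  rw [show (blockDiagonal' (fun _ : Fin k => B)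
        - blockDiagonal' Chat * (blockDiagonal' Cphat * blockDiagonal' (fun _ : Fin k => B) * (blockDiagonal' Cphat)ᵀ) * (blockDiagonal' Chat)ᵀ)
      = blockDiagonal' (fun i => B - Chat i * (Cphat i * B * (Cphat i)ᵀ) * (Chat i)ᵀ) by
    simp only [← Matrix.blockDiagonal'_mul, Matrix.blockDiagonal'_transpose,
      ← Matrix.blockDiagonal'_sub]
    rfl]
  exact frobSq_blockDiagonal' _
end

section
/- Let X ∈ ℝ^{m×n} with rank(X) = c, partitioned as X = [[X₁₁, X₁₂],[X₂₁, X₂₂]] where the top-left block X₁₁ ∈ ℝ^{c×c} is invertible. Let T = X₁₁⁻¹ X₁₂ ∈ ℝ^{c×(n−c)} and S = X₂₁ X₁₁⁻¹ ∈ ℝ^{(m−c)×c}. Then the matrices I_c + TTᵀ and I_c + SᵀS are invertible, and the Moore–Penrose pseudoinverse of X is X⁺ = [I_c; Tᵀ] (I_c + TTᵀ)⁻¹ X₁₁⁻¹ (I_c + SᵀS)⁻¹ [I_c, Sᵀ], where [I_c; Tᵀ] ∈ ℝ^{n×c} denotes I_c stacked on top of Tᵀ and [I_c, Sᵀ] ∈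 ℝ^{c×m} denotes I_c and Sᵀ placed side by side. -/
/-!
Since `rank X = c` and `X₁₁` is invertible, every bordered `(c+1) × (c+1)` minor
`det X₁₁ · (X₂₂ - X₂₁ X₁₁⁻¹ X₁₂)ᵢⱼ` vanishes, so the Schur complement is zero and
`X = B X₁₁ A` with `B = [I; S]` of full column rank and `A = [I, T]` of full row rank.
For such a factorisation `P = Aᵀ (A Aᵀ)⁻¹ X₁₁⁻¹ (Bᵀ B)⁻¹ Bᵀ` is the pseudoinverse: `X P` and
`P X` are the orthogonal projections onto the column space of `B` and the row space of `A`.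
-/

open Matrix

namespace Matrix

variable {K : Type*} [Field K] {k m n : Type*} [Fintype k] [DecidableEq k]

theorem eq_mul_inv_mul_of_rank_fromBlocks_eq_card [Fintype n]
    {A : Matrix k k K} {B : Matrix k n K} {C : Matrix m k K} {D : Matrix m n K}
    (hA : IsUnit A.det) (hrank : (fromBlocks A B C D).rank = Fintype.card k) :
    D = C * A⁻¹ * B := by
  by_contra hne
  obtain ⟨i, j, hij⟩ : ∃ i j, (D - C * A⁻¹ * B) i j ≠ 0 := by
    by_contra! h
    exact hne (sub_eq_zero.mp (ext h))
  let rows : k ⊕ Unit → k ⊕ m := Sum.map id fun _ => i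
  let cols : k ⊕ Unit → k ⊕ n := Sum.map id fun _ => j
  let M := (fromBlocks A B C D).submatrix rows cols
  have hM : M = fromBlocks A (B.submatrix id fun _ : Unit => j)
      (C.submatrix (fun _ : Unit => i) id) (D.submatrix (fun _ : Unit => i) fun _ : Unit => j) := by
    ext (a | a) (b | b) <;> rfl
  have hdet : IsUnit M.det := by
    let := invertibleOfIsUnitDet A hA
    have hschur : (D.submatrix (fun _ : Unit => i) fun _ : Unit => j) -
        C.submatrix (fun _ : Unit => i) id * ⅟A * B.submatrix id (fun _ : Unit => j) =
        (D - C * A⁻¹ * B).submatrix (fun _ : Unit => i) fun _ : Unit => j := by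
      ext; simp [invOf_eq_nonsing_inv, mul_apply]
    rw [hM, det_fromBlocks₁₁, hschur, det_unique (A := (D - C * A⁻¹ * B).submatrix _ _)]
    exact hA.mul hij.isUnit
  have := rank_submatrix_le (fromBlocks A B C D) rows cols
  rw [rank_of_isUnit M ((isUnit_iff_isUnit_det M).mpr hdet), hrank] at this
  simp at this

theorem fromBlocks_eq_fromRows_mul_mul_fromCols {R : Type*} [Semiring R]
    (A : Matrix k k R) (T : Matrix k n R) (S : Matrix m k R) :
    fromBlocks A (A * T) (S * A) (S * A * T) = fromRows 1 S * A * fromCols 1 T := by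
  rw [fromRows_mul, fromRows_mul, mul_fromCols, mul_fromCols, fromRows_fromCols_eq_fromBlocks]
  simp only [Matrix.one_mul, Matrix.mul_one]

theorem isUnit_det_one_add_mul_transpose [Fintype n] (T : Matrix k n ℝ) :
    IsUnit (1 + T * Tᵀ).det := by
  have hT : (T * Tᴴ).PosSemidef := posSemidef_self_mul_conjTranspose T
  rw [conjTranspose_eq_transpose_of_trivial] at hT
  exact (isUnit_iff_isUnit_det _).mp (PosDef.one.add_posSemidef hT).isUnit

theorem isSymm_mul_inv_transpose_mul_mul_transpose [Fintype m] (M : Matrix m k ℝ) :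
    (M * (Mᵀ * M)⁻¹ * Mᵀ).IsSymm := by
  simp [IsSymm, transpose_mul, transpose_nonsing_inv, Matrix.mul_assoc]

end Matrix

theorem isMoorePenrose_mul_mul {k m n : Type*} [Fintype k] [DecidableEq k] [Fintype m]
    [Fintype n]
    (B : Matrix m k ℝ) (K : Matrix k k ℝ) (A : Matrix k n ℝ)
    (hB : IsUnit (Bᵀ * B).det) (hK : IsUnit K.det) (hA : IsUnit (A * Aᵀ).det) :
    IsMoorePenrose (B * K * A) (Aᵀ * (A * Aᵀ)⁻¹ * K⁻¹ * (Bᵀ * B)⁻¹ * Bᵀ) := by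
  have hXP : B * K * A * (Aᵀ * (A * Aᵀ)⁻¹ * K⁻¹ * (Bᵀ * B)⁻¹ * Bᵀ) =
      B * (Bᵀ * B)⁻¹ * Bᵀ := by
    simp only [Matrix.mul_assoc]
    rw [← Matrix.mul_assoc A Aᵀ, mul_nonsing_inv_cancel_left _ _ hA,
      mul_nonsing_inv_cancel_left _ _ hK]
  have hPX : Aᵀ * (A * Aᵀ)⁻¹ * K⁻¹ * (Bᵀ * B)⁻¹ * Bᵀ * (B * K * A) =
      Aᵀ * (A * Aᵀ)⁻¹ * A := by
    simp only [Matrix.mul_assoc]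
    rw [← Matrix.mul_assoc Bᵀ B, nonsing_inv_mul_cancel_left _ _ hB,
      nonsing_inv_mul_cancel_left _ _ hK]
  refine ⟨?_, ?_, ?_, ?_⟩
  · rw [hXP]
    simp only [Matrix.mul_assoc]
    rw [← Matrix.mul_assoc Bᵀ B, nonsing_inv_mul_cancel_left _ _ hB]
  · rw [hPX]
    simp only [Matrix.mul_assoc]
    rw [← Matrix.mul_assoc A Aᵀ, mul_nonsing_inv_cancel_left _ _ hA]
  · rw [hXP]
    exact (isSymm_mul_inv_transpose_mul_mul_transpose B).eq
  · rw [hPX]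
    simpa only [transpose_transpose] using (isSymm_mul_inv_transpose_mul_mul_transpose Aᵀ).eq

/-- Partitioned-matrix pseudoinverse: for
`X = [[X₁₁, X₁₂],[X₂₁, X₂₂]]` of rank `c` with `X₁₁ ∈ ℝ^{c×c}` invertible,
putting `T = X₁₁⁻¹ X₁₂` and `S = X₂₁ X₁₁⁻¹`, the matrices `I + T Tᵀ` and
`I + Sᵀ S` are invertible and
`X⁺ = [I; Tᵀ] (I + T Tᵀ)⁻¹ X₁₁⁻¹ (I + Sᵀ S)⁻¹ [I, Sᵀ]`. -/
theorem pinv_partitioned_matrix {c r s : ℕ}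
    (X11 : Matrix (Fin c) (Fin c) ℝ) (X12 : Matrix (Fin c) (Fin s) ℝ)
    (X21 : Matrix (Fin r) (Fin c) ℝ) (X22 : Matrix (Fin r) (Fin s) ℝ)
    (hX11 : IsUnit X11.det)
    (X : Matrix (Fin c ⊕ Fin r) (Fin c ⊕ Fin s) ℝ)
    (hX : X = Matrix.fromBlocks X11 X12 X21 X22)
    (hrank : X.rank = c)
    (T : Matrix (Fin c) (Fin s) ℝ) (hT : T = X11⁻¹ * X12)
    (S : Matrix (Fin r) (Fin c) ℝ) (hS : S = X21 * X11⁻¹) :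
    IsUnit (1 + T * Tᵀ).det ∧ IsUnit (1 + Sᵀ * S).det ∧
      IsMoorePenrose X
        (Matrix.fromRows (1 : Matrix (Fin c) (Fin c) ℝ) Tᵀ *
          (1 + T * Tᵀ)⁻¹ * X11⁻¹ * (1 + Sᵀ * S)⁻¹ *
          Matrix.fromCols (1 : Matrix (Fin c) (Fin c) ℝ) Sᵀ) := by
  have hTT := isUnit_det_one_add_mul_transpose T
  have hSS : IsUnit (1 + Sᵀ * S).det := by
    simpa only [transpose_transpose] using isUnit_det_one_add_mul_transpose Sᵀ
  refine ⟨hTT, hSS, ?_⟩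
  have h12 : X11 * T = X12 := by rw [hT, mul_nonsing_inv_cancel_left _ _ hX11]
  have h21 : S * X11 = X21 := by rw [hS, nonsing_inv_mul_cancel_right _ _ hX11]
  have h22 : S * X11 * T = X22 := by
    rw [h21, hT, ← Matrix.mul_assoc,
      ← eq_mul_inv_mul_of_rank_fromBlocks_eq_card hX11 (by rw [← hX, hrank, Fintype.card_fin])]
  let A : Matrix (Fin c) (Fin c ⊕ Fin s) ℝ := fromCols 1 T
  let B : Matrix (Fin c ⊕ Fin r) (Fin c) ℝ := fromRows 1 S
  have hfactor : X = B * X11 * A := by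
    rw [hX, ← h12, ← h21, ← h22, fromBlocks_eq_fromRows_mul_mul_fromCols]
  have hgramA : A * Aᵀ = 1 + T * Tᵀ := by
    rw [transpose_fromCols, transpose_one, fromCols_mul_fromRows, Matrix.mul_one]
  have hgramB : Bᵀ * B = 1 + Sᵀ * S := by
    rw [transpose_fromRows, transpose_one, fromCols_mul_fromRows, Matrix.mul_one]
  have := isMoorePenrose_mul_mul B X11 A (hgramB ▸ hSS) hX11 (hgramA ▸ hTT)
  rwa [hgramA, hgramB, transpose_fromCols, transpose_fromRows, transpose_one, ← hfactor] at this
end
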